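/- Let C ⊂ [0,1] be a general Cantor set with aperture ratio Ap(C) ≤ 1. Then C + C = [0, 2], i.e., every real number in [0,2] is a sum of two elements of C. -/
import Mathlib


/-- A construction scheme for a general Cantor set in `[0,1]`: intervals are
indexed by finite boolean strings; the interval of `s` is `[l s, r s]`, and it
splits into the two children `[l s, r (false :: s)] ∪ [l (true :: s), r s]`
with `l s < r (false :: s) < l (true :: s) < r s`. -/
structure CantorScheme where
  l : List Bool → ℝ
  r : List Bool → ℝ
  l_nil : l [] = 0
  r_nil : r [] = 1
  l_false : ∀ s, l (false :: s) = l s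
  r_true : ∀ s, r (true :: s) = r s
  lt1 : ∀ s, l s < r (false :: s)
  lt2 : ∀ s, r (false :: s) < l (true :: s)
  lt3 : ∀ s, l (true :: s) < r s

/-- The resulting Cantor set. -/
def CantorScheme.set (S : CantorScheme) : Set ℝ :=
  ⋂ n : ℕ, ⋃ s ∈ {s : List Bool | s.length = n}, Set.Icc (S.l s) (S.r s)

namespace CantorScheme

variable (C : CantorScheme)

lemma l_lt_r (s : List Bool) : C.l s < C.r s := by
  have h1 := C.lt1 s; have h2 := C.lt2 s; have h3 := C.lt3 s; linarith

lemma l_le_cons (d : Bool) (s : List Bool) : C.l s ≤ C.l (d :: s) := by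
  cases d
  · rw [C.l_false]
  · have h1 := C.lt1 s; have h2 := C.lt2 s; linarith

lemma r_cons_le (d : Bool) (s : List Bool) : C.r (d :: s) ≤ C.r s := by
  cases d
  · have h2 := C.lt2 s; have h3 := C.lt3 s; linarith
  · rw [C.r_true]

lemma mem_append (x : ℝ) :
    ∀ u v : List Bool, C.l (u ++ v) ≤ x → x ≤ C.r (u ++ v) → C.l v ≤ x ∧ x ≤ C.r v := by
  intro u
  induction u with
  | nil => exact fun v h1 h2 => ⟨h1, h2⟩
  | cons d u ih =>
    intro v h1 h2
    exact ih v (le_trans (C.l_le_cons d (u ++ v)) h1) (le_trans h2 (C.r_cons_le d (u ++ v)))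

lemma mem_set_of (x : ℝ)
    (h : ∀ N : ℕ, ∃ s : List Bool, N ≤ s.length ∧ C.l s ≤ x ∧ x ≤ C.r s) : x ∈ C.set := by
  refine Set.mem_iInter.2 fun m => ?_
  obtain ⟨s, hm, h1, h2⟩ := h m
  have hd : C.l (s.drop (s.length - m)) ≤ x ∧ x ≤ C.r (s.drop (s.length - m)) := by
    have h' := C.mem_append x (s.take (s.length - m)) (s.drop (s.length - m))
    rw [List.take_append_drop] at h'
    exact h' h1 h2
  refine Set.mem_biUnion ?_ ⟨hd.1, hd.2⟩
  show (s.drop (s.length - m)).length = m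
  rw [List.length_drop]
  omega

lemma r_replicate (u : List Bool) : ∀ k, C.r (List.replicate k true ++ u) = C.r u
  | 0 => rfl
  | k + 1 => by
    rw [List.replicate_succ, List.cons_append, C.r_true, r_replicate u k]

lemma l_replicate (u : List Bool) : ∀ k, C.l (List.replicate k false ++ u) = C.l u
  | 0 => rfl
  | k + 1 => by
    rw [List.replicate_succ, List.cons_append, C.l_false, l_replicate u k]

lemma r_mem (u : List Bool) : C.r u ∈ C.set := by
  refine C.mem_set_of _ fun N => ⟨List.replicate N true ++ u, ?_, ?_, ?_⟩
  · simp
  · have h := C.l_lt_r (List.replicate N true ++ u)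
    rw [C.r_replicate] at h
    exact h.le
  · rw [C.r_replicate]

lemma l_mem (u : List Bool) : C.l u ∈ C.set := by
  refine C.mem_set_of _ fun N => ⟨List.replicate N false ++ u, ?_, ?_, ?_⟩
  · simp
  · rw [C.l_replicate]
  · have h := C.l_lt_r (List.replicate N false ++ u)
    rw [C.l_replicate] at h
    exact h.le

lemma mem_zero_one {x : ℝ} (h : x ∈ C.set) : 0 ≤ x ∧ x ≤ 1 := by
  have h0 := Set.mem_iInter.1 h 0
  simp only [Set.mem_setOf_eq, Set.mem_iUnion] at h0
  obtain ⟨s, hs0, hx⟩ := h0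
  have hsnil : s = [] := List.eq_nil_of_length_eq_zero hs0
  subst hsnil
  rw [C.l_nil, C.r_nil] at hx
  exact hx

end CantorScheme

/-- Crossing relation between the interval `[a, c]` and the interval `[p, w]`. -/
def CrossP (a c p w : ℝ) : Prop :=
  (a ≤ p ∧ p ≤ c ∧ c ≤ w) ∨ (p ≤ a ∧ a ≤ w ∧ w ≤ c)

lemma key_ineq {b b' c p q q' : ℝ} (g2 : b' - b ≤ c - b') (g3 : q' - q ≤ q - p) :
    p ≤ b ∨ b' ≤ p ∨ c ≤ q ∨ q' ≤ c ∨ (p ≤ b' ∧ b' ≤ q ∧ q ≤ c) := by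
  by_contra h
  push_neg at h
  obtain ⟨h1, h2, h3, h4, h5⟩ := h
  have hq : q < b' := by
    by_contra hq'
    push_neg at hq'
    exact absurd h3 (not_lt.2 (h5 h2.le hq').le)
  linarith

namespace CantorScheme

/-- The key refinement step: from a crossing pair of construction intervals we can
descend in at least one of the two trees, preserving the crossing. -/
lemma step_ex (C : CantorScheme) (y : ℝ)
    (hap : ∀ s : List Bool,
      C.l (true :: s) - C.r (false :: s) ≤ C.r (false :: s) - C.l s ∧
      C.l (true :: s) - C.r (false :: s) ≤ C.r s - C.l (true :: s))
    (s t : List Bool) (h : CrossP (C.l s) (C.r s) (y - C.r t) (y - C.l t)) :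
    ∃ st : List Bool × List Bool,
      (st.1 = s ∨ ∃ d, st.1 = d :: s) ∧ (st.2 = t ∨ ∃ d, st.2 = d :: t) ∧
      s.length + t.length < st.1.length + st.2.length ∧
      CrossP (C.l st.1) (C.r st.1) (y - C.r st.2) (y - C.l st.2) := by
  have e1 : C.l (false :: s) = C.l s := C.l_false s
  have e2 : C.r (true :: s) = C.r s := C.r_true s
  have e3 : C.l (false :: t) = C.l t := C.l_false t
  have e4 : C.r (true :: t) = C.r t := C.r_true t
  have o1 : C.l s < C.r (false :: s) := C.lt1 s
  have o2 : C.r (false :: s) < C.l (true :: s) := C.lt2 s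
  have o3 : C.l (true :: s) < C.r s := C.lt3 s
  have o4 : C.l t < C.r (false :: t) := C.lt1 t
  have o5 : C.r (false :: t) < C.l (true :: t) := C.lt2 t
  have o6 : C.l (true :: t) < C.r t := C.lt3 t
  have has1 := (hap s).1
  have has2 := (hap s).2
  have hat1 := (hap t).1
  have hat2 := (hap t).2
  rcases h with ⟨h1, h2, h3⟩ | ⟨h1, h2, h3⟩
  · -- type 1 crossing : l s ≤ y - r t ≤ r s ≤ y - l t
    have g2 : C.l (true :: s) - C.r (false :: s) ≤ C.r s - C.l (true :: s) := has2
    have g3 : (y - C.r (false :: t)) - (y - C.l (true :: t)) ≤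
        (y - C.l (true :: t)) - (y - C.r t) := by linarith
    rcases key_ineq g2 g3 with hc | hc | hc | hc | ⟨hc1, hc2, hc3⟩
    · exact ⟨(false :: s, t), Or.inr ⟨false, rfl⟩, Or.inl rfl,
        by simp only [List.length_cons]; omega,
        Or.inl ⟨by linarith, hc, by linarith⟩⟩
    · exact ⟨(true :: s, t), Or.inr ⟨true, rfl⟩, Or.inl rfl,
        by simp only [List.length_cons]; omega,
        Or.inl ⟨hc, by linarith, by linarith⟩⟩
    · exact ⟨(s, true :: t), Or.inl rfl, Or.inr ⟨true, rfl⟩,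
        by simp only [List.length_cons]; omega,
        Or.inl ⟨by linarith, by linarith, hc⟩⟩
    · exact ⟨(s, false :: t), Or.inl rfl, Or.inr ⟨false, rfl⟩,
        by simp only [List.length_cons]; omega,
        Or.inl ⟨by linarith, hc, by linarith⟩⟩
    · exact ⟨(true :: s, true :: t), Or.inr ⟨true, rfl⟩, Or.inr ⟨true, rfl⟩,
        by simp only [List.length_cons]; omega,
        Or.inr ⟨by linarith, by linarith, by linarith⟩⟩
  · -- type 2 crossing : y - r t ≤ l s ≤ y - l t ≤ r s
    have g2 : (y - C.r (false :: t)) - (y - C.l (true :: t)) ≤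
        (y - C.l t) - (y - C.r (false :: t)) := by linarith
    have g3 : C.l (true :: s) - C.r (false :: s) ≤ C.r (false :: s) - C.l s := has1
    rcases key_ineq g2 g3 with hc | hc | hc | hc | ⟨hc1, hc2, hc3⟩
    · -- C.l s ≤ y - C.l (true :: t) : refine t to true :: t
      exact ⟨(s, true :: t), Or.inl rfl, Or.inr ⟨true, rfl⟩,
        by simp only [List.length_cons]; omega,
        Or.inr ⟨by linarith, hc, by linarith⟩⟩
    · -- y - C.r (false :: t) ≤ C.l s : refine t to false :: t
      exact ⟨(s, false :: t), Or.inl rfl, Or.inr ⟨false, rfl⟩,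
        by simp only [List.length_cons]; omega,
        Or.inr ⟨hc, by linarith, by linarith⟩⟩
    · -- y - C.l t ≤ C.r (false :: s) : refine s to false :: s
      exact ⟨(false :: s, t), Or.inr ⟨false, rfl⟩, Or.inl rfl,
        by simp only [List.length_cons]; omega,
        Or.inr ⟨by linarith, by linarith, hc⟩⟩
    · -- C.l (true :: s) ≤ y - C.l t : refine s to true :: s
      exact ⟨(true :: s, t), Or.inr ⟨true, rfl⟩, Or.inl rfl,
        by simp only [List.length_cons]; omega,
        Or.inr ⟨by linarith, hc, by linarith⟩⟩
    · -- double refinement : (false :: s, false :: t), type 1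
      exact ⟨(false :: s, false :: t), Or.inr ⟨false, rfl⟩, Or.inr ⟨false, rfl⟩,
        by simp only [List.length_cons]; omega,
        Or.inl ⟨by linarith, hc2, by linarith⟩⟩

/-- The recursively constructed chain of crossing pairs. -/
noncomputable def chain (C : CantorScheme) (y : ℝ)
    (hap : ∀ s : List Bool,
      C.l (true :: s) - C.r (false :: s) ≤ C.r (false :: s) - C.l s ∧
      C.l (true :: s) - C.r (false :: s) ≤ C.r s - C.l (true :: s))
    (h0 : 0 ≤ y) (h2 : y ≤ 2) :
    ℕ → {st : List Bool × List Bool //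
      CrossP (C.l st.1) (C.r st.1) (y - C.r st.2) (y - C.l st.2)}
  | 0 => ⟨([], []), by
      show CrossP (C.l []) (C.r []) (y - C.r []) (y - C.l [])
      rw [C.l_nil, C.r_nil]
      rcases le_total 1 y with h | h
      · exact Or.inl ⟨by linarith, by linarith, by linarith⟩
      · exact Or.inr ⟨by linarith, by linarith, by linarith⟩⟩
  | n + 1 =>
    ⟨(C.step_ex y hap (chain C y hap h0 h2 n).1.1 (chain C y hap h0 h2 n).1.2
        (chain C y hap h0 h2 n).2).choose,
     (C.step_ex y hap (chain C y hap h0 h2 n).1.1 (chain C y hap h0 h2 n).1.2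
        (chain C y hap h0 h2 n).2).choose_spec.2.2.2⟩

lemma chain_spec (C : CantorScheme) (y : ℝ)
    (hap : ∀ s : List Bool,
      C.l (true :: s) - C.r (false :: s) ≤ C.r (false :: s) - C.l s ∧
      C.l (true :: s) - C.r (false :: s) ≤ C.r s - C.l (true :: s))
    (h0 : 0 ≤ y) (h2 : y ≤ 2) (n : ℕ) :
    ((chain C y hap h0 h2 (n + 1)).1.1 = (chain C y hap h0 h2 n).1.1 ∨
      ∃ d, (chain C y hap h0 h2 (n + 1)).1.1 = d :: (chain C y hap h0 h2 n).1.1) ∧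
    ((chain C y hap h0 h2 (n + 1)).1.2 = (chain C y hap h0 h2 n).1.2 ∨
      ∃ d, (chain C y hap h0 h2 (n + 1)).1.2 = d :: (chain C y hap h0 h2 n).1.2) ∧
    (chain C y hap h0 h2 n).1.1.length + (chain C y hap h0 h2 n).1.2.length <
      (chain C y hap h0 h2 (n + 1)).1.1.length + (chain C y hap h0 h2 (n + 1)).1.2.length := by
  have h := (C.step_ex y hap (chain C y hap h0 h2 n).1.1 (chain C y hap h0 h2 n).1.2
      (chain C y hap h0 h2 n).2).choose_spec
  exact ⟨h.1, h.2.1, h.2.2.1⟩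

end CantorScheme

section helpers

/-- Length is monotone along an extension chain. -/
lemma len_mono_of_ext {f : ℕ → List Bool}
    (hext : ∀ n, f (n + 1) = f n ∨ ∃ d, f (n + 1) = d :: f n) :
    ∀ m n, m ≤ n → (f m).length ≤ (f n).length := by
  intro m n h
  induction n, h using Nat.le_induction with
  | base => exact le_rfl
  | succ n hmn ih =>
    rcases hext n with he | ⟨d, he⟩
    · rw [he]; exact ih
    · rw [he, List.length_cons]; omega

lemma step_len_of_ext {f : ℕ → List Bool}
    (hext : ∀ n, f (n + 1) = f n ∨ ∃ d, f (n + 1) = d :: f n) :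
    ∀ m n, m ≤ n → f n = f m ∨ (f m).length < (f n).length := by
  intro m n h
  induction n, h using Nat.le_induction with
  | base => exact Or.inl rfl
  | succ n hmn ih =>
    rcases hext n with he | ⟨d, he⟩
    · rw [he]; exact ih
    · right
      have hlt : (f n).length < (f (n + 1)).length := by rw [he, List.length_cons]; omega
      rcases ih with h' | h'
      · rw [h'] at hlt; exact hlt
      · exact lt_trans h' hlt

lemma stab_of_bounded {f : ℕ → List Bool}
    (hext : ∀ n, f (n + 1) = f n ∨ ∃ d, f (n + 1) = d :: f n)
    {N : ℕ} (hN : ∀ n, (f n).length < N) :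
    ∃ n0, ∀ n, n0 ≤ n → f n = f n0 := by
  by_contra hcon
  push_neg at hcon
  have grow : ∀ k : ℕ, ∃ n, k ≤ (f n).length := by
    intro k
    induction k with
    | zero => exact ⟨0, Nat.zero_le _⟩
    | succ k ih =>
      obtain ⟨n, hn⟩ := ih
      obtain ⟨m, hm, hne⟩ := hcon n
      rcases step_len_of_ext hext n m hm with he | he
      · exact absurd he hne
      · exact ⟨m, by omega⟩
  obtain ⟨n, hn⟩ := grow N
  exact absurd hn (by have := hN n; omega)

lemma lf_mono_of_ext (C : CantorScheme) {f : ℕ → List Bool}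
    (hext : ∀ n, f (n + 1) = f n ∨ ∃ d, f (n + 1) = d :: f n) :
    ∀ m n, m ≤ n → C.l (f m) ≤ C.l (f n) := by
  intro m n h
  induction n, h using Nat.le_induction with
  | base => exact le_rfl
  | succ n hmn ih =>
    rcases hext n with he | ⟨d, he⟩
    · rw [he]; exact ih
    · rw [he]; exact le_trans ih (C.l_le_cons d (f n))

lemma rf_mono_of_ext (C : CantorScheme) {f : ℕ → List Bool}
    (hext : ∀ n, f (n + 1) = f n ∨ ∃ d, f (n + 1) = d :: f n) :
    ∀ m n, m ≤ n → C.r (f n) ≤ C.r (f m) := by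
  intro m n h
  induction n, h using Nat.le_induction with
  | base => exact le_rfl
  | succ n hmn ih =>
    rcases hext n with he | ⟨d, he⟩
    · rw [he]; exact ih
    · rw [he]; exact le_trans (C.r_cons_le d (f n)) ih

end helpers

/-- Hall's theorem: if the aperture ratio of a general Cantor set `C ⊂ [0,1]`
is at most `1` (each removed gap is no longer than either adjacent retained
interval), then `C + C = [0,2]`. -/
theorem cantor_sum_interval (C : CantorScheme)
    (hap : ∀ s : List Bool,
      C.l (true :: s) - C.r (false :: s) ≤ C.r (false :: s) - C.l s ∧
      C.l (true :: s) - C.r (false :: s) ≤ C.r s - C.l (true :: s)) :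
    {y : ℝ | ∃ x₁ ∈ C.set, ∃ x₂ ∈ C.set, x₁ + x₂ = y} = Set.Icc (0 : ℝ) 2 := by
  ext y
  simp only [Set.mem_setOf_eq, Set.mem_Icc]
  constructor
  · rintro ⟨x₁, hx₁, x₂, hx₂, rfl⟩
    obtain ⟨a1, b1⟩ := C.mem_zero_one hx₁
    obtain ⟨a2, b2⟩ := C.mem_zero_one hx₂
    constructor <;> linarith
  · rintro ⟨h0, h2⟩
    set S : ℕ → List Bool := fun n => (CantorScheme.chain C y hap h0 h2 n).1.1 with hS_def
    set T : ℕ → List Bool := fun n => (CantorScheme.chain C y hap h0 h2 n).1.2 with hT_def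
    have good : ∀ n, CrossP (C.l (S n)) (C.r (S n)) (y - C.r (T n)) (y - C.l (T n)) :=
      fun n => (CantorScheme.chain C y hap h0 h2 n).2
    have extS : ∀ n, S (n + 1) = S n ∨ ∃ d, S (n + 1) = d :: S n :=
      fun n => (CantorScheme.chain_spec C y hap h0 h2 n).1
    have extT : ∀ n, T (n + 1) = T n ∨ ∃ d, T (n + 1) = d :: T n :=
      fun n => (CantorScheme.chain_spec C y hap h0 h2 n).2.1
    have lensum : ∀ n, (S n).length + (T n).length < (S (n + 1)).length + (T (n + 1)).length :=
      fun n => (CantorScheme.chain_spec C y hap h0 h2 n).2.2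
    have lensum' : ∀ n, n ≤ (S n).length + (T n).length := by
      intro n
      induction n with
      | zero => exact Nat.zero_le _
      | succ n ih => have := lensum n; omega
    have lS_mono := lf_mono_of_ext C extS
    have rS_mono := rf_mono_of_ext C extS
    have lT_mono := lf_mono_of_ext C extT
    have rT_mono := rf_mono_of_ext C extT
    set A : ℕ → ℝ := fun n => max (C.l (S n)) (y - C.r (T n)) with hA_def
    have hAle : ∀ n, A n ≤ C.r (S n) ∧ A n ≤ y - C.l (T n) := by
      intro n
      rcases good n with ⟨g1, g2, g3⟩ | ⟨g1, g2, g3⟩ <;>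
        refine ⟨max_le ?_ ?_, max_le ?_ ?_⟩ <;>
        linarith [C.l_lt_r (S n), C.l_lt_r (T n)]
    by_cases hT : ∀ N : ℕ, ∃ n, N ≤ (T n).length
    · by_cases hS : ∀ N : ℕ, ∃ n, N ≤ (S n).length
      · -- both trees are refined unboundedly often
        have Amono : ∀ m n, m ≤ n → A m ≤ A n := by
          intro m n h
          exact max_le_max (lS_mono m n h) (by have := rT_mono m n h; linarith)
        have bdd : BddAbove (Set.range A) := by
          refine ⟨C.r (S 0), ?_⟩
          rintro _ ⟨n, rfl⟩
          exact le_trans (hAle n).1 (rS_mono 0 n (Nat.zero_le n))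
        set x := ⨆ n, A n with hx
        have hx1 : ∀ n, A n ≤ x := fun n => le_ciSup bdd n
        have hx2 : ∀ m, x ≤ C.r (S m) := by
          intro m
          refine ciSup_le fun n => ?_
          exact le_trans (Amono n (max n m) (le_max_left _ _))
            (le_trans (hAle (max n m)).1 (rS_mono m (max n m) (le_max_right _ _)))
        have hx3 : ∀ m, x ≤ y - C.l (T m) := by
          intro m
          refine ciSup_le fun n => ?_
          refine le_trans (Amono n (max n m) (le_max_left _ _))
            (le_trans (hAle (max n m)).2 ?_)
          have := lT_mono m (max n m) (le_max_right _ _); linarith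
        have hmem1 : x ∈ C.set := by
          refine C.mem_set_of _ fun N => ?_
          obtain ⟨n, hn⟩ := hS N
          exact ⟨S n, hn, le_trans (le_max_left _ _) (hx1 n), hx2 n⟩
        have hmem2 : y - x ∈ C.set := by
          refine C.mem_set_of _ fun N => ?_
          obtain ⟨n, hn⟩ := hT N
          refine ⟨T n, hn, by have := hx3 n; linarith, ?_⟩
          have := le_trans (le_max_right (C.l (S n)) (y - C.r (T n))) (hx1 n); linarith
        exact ⟨x, hmem1, y - x, hmem2, by ring⟩
      · -- S stabilizes, T is refined unboundedly often
        push_neg at hS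
        obtain ⟨N, hN⟩ := hS
        obtain ⟨n0, hstab⟩ := stab_of_bounded extS hN
        have lenT_mono := len_mono_of_ext extT
        by_cases hp : ∀ m, ∃ n, m ≤ n ∧ n0 ≤ n ∧
            C.l (T n) ≤ y - C.r (S n0) ∧ y - C.r (S n0) ≤ C.r (T n)
        · have hz : ∀ k, C.l (T k) ≤ y - C.r (S n0) ∧ y - C.r (S n0) ≤ C.r (T k) := by
            intro k
            obtain ⟨n, hkn, _, hb1, hb2⟩ := hp k
            exact ⟨le_trans (lT_mono k n hkn) hb1, le_trans hb2 (rT_mono k n hkn)⟩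
          refine ⟨C.r (S n0), C.r_mem _, y - C.r (S n0), ?_, by ring⟩
          refine C.mem_set_of _ fun N' => ?_
          obtain ⟨n, hn⟩ := hT N'
          exact ⟨T n, hn, (hz n).1, (hz n).2⟩
        · push_neg at hp
          obtain ⟨m, hm⟩ := hp
          have hz : ∀ n, m ≤ n → n0 ≤ n →
              C.l (T n) ≤ y - C.l (S n0) ∧ y - C.l (S n0) ≤ C.r (T n) := by
            intro n hn1 hn2
            have hg := good n
            rw [hstab n hn2] at hg
            rcases hg with ⟨g1, g2, g3⟩ | ⟨g1, g2, g3⟩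
            · exfalso
              have hb := hm n hn1 hn2 (by linarith)
              linarith
            · exact ⟨by linarith, by linarith⟩
          refine ⟨C.l (S n0), C.l_mem _, y - C.l (S n0), ?_, by ring⟩
          refine C.mem_set_of _ fun N' => ?_
          obtain ⟨n1, hn1⟩ := hT N'
          refine ⟨T (max n1 (max m n0)), le_trans hn1 (lenT_mono n1 _ (le_max_left _ _)), ?_, ?_⟩
          · exact (hz _ (le_trans (le_max_left m n0) (le_max_right _ _))
              (le_trans (le_max_right m n0) (le_max_right _ _))).1
          · exact (hz _ (le_trans (le_max_left m n0) (le_max_right _ _))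
              (le_trans (le_max_right m n0) (le_max_right _ _))).2
    · -- T stabilizes, S is refined unboundedly often
      push_neg at hT
      obtain ⟨N, hN⟩ := hT
      obtain ⟨n0, hstab⟩ := stab_of_bounded extT hN
      have lenS_mono := len_mono_of_ext extS
      have hS' : ∀ N' : ℕ, ∃ n, N' ≤ (S n).length := by
        intro N'
        refine ⟨N' + N, ?_⟩
        have := lensum' (N' + N)
        have := hN (N' + N)
        omega
      by_cases hp : ∀ m, ∃ n, m ≤ n ∧ n0 ≤ n ∧
          C.l (S n) ≤ y - C.r (T n0) ∧ y - C.r (T n0) ≤ C.r (S n)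
      · have hz : ∀ k, C.l (S k) ≤ y - C.r (T n0) ∧ y - C.r (T n0) ≤ C.r (S k) := by
          intro k
          obtain ⟨n, hkn, _, hb1, hb2⟩ := hp k
          exact ⟨le_trans (lS_mono k n hkn) hb1, le_trans hb2 (rS_mono k n hkn)⟩
        refine ⟨y - C.r (T n0), ?_, C.r (T n0), C.r_mem _, by ring⟩
        refine C.mem_set_of _ fun N' => ?_
        obtain ⟨n, hn⟩ := hS' N'
        exact ⟨S n, hn, (hz n).1, (hz n).2⟩
      · push_neg at hp
        obtain ⟨m, hm⟩ := hp
        have hz : ∀ n, m ≤ n → n0 ≤ n →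
            C.l (S n) ≤ y - C.l (T n0) ∧ y - C.l (T n0) ≤ C.r (S n) := by
          intro n hn1 hn2
          have hg := good n
          rw [hstab n hn2] at hg
          rcases hg with ⟨g1, g2, g3⟩ | ⟨g1, g2, g3⟩
          · exfalso
            have hb := hm n hn1 hn2 (by linarith)
            linarith
          · exact ⟨by linarith, by linarith⟩
        refine ⟨y - C.l (T n0), ?_, C.l (T n0), C.l_mem _, by ring⟩
        refine C.mem_set_of _ fun N' => ?_
        obtain ⟨n1, hn1⟩ := hS' N'
        refine ⟨S (max n1 (max m n0)), le_trans hn1 (lenS_mono n1 _ (le_max_left _ _)), ?_, ?_⟩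
        · exact (hz _ (le_trans (le_max_left m n0) (le_max_right _ _))
            (le_trans (le_max_right m n0) (le_max_right _ _))).1
        · exact (hz _ (le_trans (le_max_left m n0) (le_max_right _ _))
            (le_trans (le_max_right m n0) (le_max_right _ _))).2
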